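/- If Π_{j=1}^∞ p_j = 0, then the transition operator S acting on l^1 has no eigenvalues: there is no λ ∈ ℂ and nonzero v ∈ l^1 with S v = λ v. -/

import Mathlib

/-!
An eigenvector `v` is determined by `v 0`: in row `n` of `S v = λ v` the coefficient of
`v (n + 1)` is `p_1 ⋯ p_{ζ_n} ≠ 0` and every other index is at most `n`. The explicit solution is
`v n = v 0 · ∏_r ι_λ(r) ^ a_r(n)`, because `ι_λ(r) ^ d_r = p_{r+1} ι_λ(r+1) + 1 - p_{r+1}` absorbs
each carry. At `n = q_{r-1}` this gives `v (q_{r-1}) = v 0 · ι_λ(r)`, so `v ∈ l¹` forces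
`Σ_r |ι_λ(r)| < ∞`. The same identity yields `|1 - p_{r+1}| ≤ |ι_λ(r)| + |ι_λ(r+1)|` once
`|ι_λ(r)| ≤ 1`, hence `Σ_j (1 - p_j) < ∞` and `∏_j p_j` has a nonzero limit.
-/

open Filter Finset
open scoped ENNReal Topology ZeroAtInfty

noncomputable section

namespace AMFC

/-- `q d j = d 0 * d 1 * ... * d j`. -/
def q (d : ℕ → ℕ) (j : ℕ) : ℕ := ∏ i ∈ Finset.range (j + 1), d i

/-- For `j ≥ 1`, `digit d n j = ⌊n / q_{j-1}⌋ mod d_j` is the `j`-th digit of `n`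
in the Cantor system of numeration. -/
def digit (d : ℕ → ℕ) (n j : ℕ) : ℕ := (n / q d (j - 1)) % d j

/-- The counter `ζ_n = min { j ≥ 1 : a_j(n) ≠ d_j - 1 }`. -/
def zeta (d : ℕ → ℕ) (n : ℕ) : ℕ := sInf {j | 1 ≤ j ∧ digit d n j ≠ d j - 1}

open scoped Classical in
/-- The transition probabilities of the stochastic adding machine. -/
def s (d : ℕ → ℕ) (p : ℕ → ℝ) (n m : ℕ) : ℝ :=
  if m = n + 1 then ∏ j ∈ Finset.Icc 1 (zeta d n), p j
  else if m = n then 1 - p 1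
  else if h : ∃ r, 1 ≤ r ∧ r + 1 ≤ zeta d n ∧
      n = m + ∑ j ∈ Finset.Icc 1 r, (d j - 1) * q d (j - 1)
    then (1 - p (h.choose + 1)) * ∏ j ∈ Finset.Icc 1 h.choose, p j
  else 0

/-- `f j (z) = ((z - (1 - p j)) / p j) ^ (d j)`. -/
def f (d : ℕ → ℕ) (p : ℕ → ℝ) (j : ℕ) (z : ℂ) : ℂ :=
  ((z - (1 - (p j : ℂ))) / (p j : ℂ)) ^ d j

/-- `ftil j = f j ∘ ... ∘ f 1`, with `ftil 0 = id`. -/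
def ftil (d : ℕ → ℕ) (p : ℕ → ℝ) : ℕ → ℂ → ℂ
  | 0 => id
  | j + 1 => f d p (j + 1) ∘ ftil d p j

/-- The fibered filled Julia set `E = {z : limsup_j |ftil j z| < ∞}`. -/
def E (d : ℕ → ℕ) (p : ℕ → ℝ) : Set ℂ :=
  {z | Filter.limsup (fun j => (‖ftil d p j z‖₊ : ℝ≥0∞)) Filter.atTop < ⊤}

/-- `ι_λ(r) = (ftil (r-1) λ - (1 - p r)) / p r` for `r ≥ 1`. -/
def iota (d : ℕ → ℕ) (p : ℕ → ℝ) (lam : ℂ) (r : ℕ) : ℂ :=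
  (ftil d p (r - 1) lam - (1 - (p r : ℂ))) / (p r : ℂ)

/-- `v_λ(n) = ∏_{r ≥ 1} ι_λ(r) ^ a_r(n)`, a finite product. -/
def vlam (d : ℕ → ℕ) (p : ℕ → ℝ) (lam : ℂ) (n : ℕ) : ℂ :=
  ∏ᶠ r : ℕ, iota d p lam (r + 1) ^ digit d n (r + 1)

/-- The point spectrum of a continuous linear operator. -/
def pointSpectrum {M : Type*} [NormedAddCommGroup M] [NormedSpace ℂ M]
    (T : M →L[ℂ] M) : Set ℂ :=
  {lam | ∃ v, v ≠ 0 ∧ T v = lam • v}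

/-- The residual spectrum: `T - λI` is injective but its range is not dense. -/
def residualSpectrum {M : Type*} [NormedAddCommGroup M] [NormedSpace ℂ M]
    (T : M →L[ℂ] M) : Set ℂ :=
  {lam | Function.Injective ⇑(T - lam • (1 : M →L[ℂ] M)) ∧
    ¬ DenseRange ⇑(T - lam • (1 : M →L[ℂ] M))}

/-- The continuous spectrum: `T - λI` is injective with dense range, but not surjective. -/
def continuousSpectrum {M : Type*} [NormedAddCommGroup M] [NormedSpace ℂ M]
    (T : M →L[ℂ] M) : Set ℂ :=
  {lam | Function.Injective ⇑(T - lam • (1 : M →L[ℂ] M)) ∧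
    DenseRange ⇑(T - lam • (1 : M →L[ℂ] M)) ∧
    Set.range ⇑(T - lam • (1 : M →L[ℂ] M)) ≠ Set.univ}


structure IsCantorBase (d : ℕ → ℕ) : Prop where
  d_zero : d 0 = 1
  two_le : ∀ j, 1 ≤ j → 2 ≤ d j

section Numeration

variable {d : ℕ → ℕ}

lemma q_succ (d : ℕ → ℕ) (j : ℕ) : q d (j + 1) = q d j * d (j + 1) :=
  prod_range_succ d (j + 1)

lemma q_dvd_q {j k : ℕ} (h : j ≤ k) : q d j ∣ q d k :=
  prod_dvd_prod_of_subset _ _ d (range_subset_range.2 (by omega))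

lemma digit_eq_zero_of_lt {n j : ℕ} (h : n < q d (j - 1)) : digit d n j = 0 := by
  rw [digit, Nat.div_eq_of_lt h, Nat.zero_mod]

lemma digit_eq_of_div_eq {n n' k j : ℕ} (hkj : k < j) (h : n / q d k = n' / q d k) :
    digit d n j = digit d n' j := by
  obtain ⟨u, hu⟩ := q_dvd_q (d := d) (show k ≤ j - 1 by omega)
  rw [digit, digit, hu, ← Nat.div_div_eq_div_mul, ← Nat.div_div_eq_div_mul, h]

lemma digit_of_lt_zeta {n j : ℕ} (h1 : 1 ≤ j) (h2 : j < zeta d n) :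
    digit d n j = d j - 1 := by
  by_contra hne
  exact Nat.notMem_of_lt_sInf h2 ⟨h1, hne⟩

lemma dvd_add_one_iff_mod_eq {x D : ℕ} (hD : 0 < D) : D ∣ x + 1 ↔ x % D = D - 1 := by
  obtain ⟨b, rfl⟩ : ∃ b, D = b + 1 := ⟨D - 1, by omega⟩
  rw [Nat.dvd_iff_mod_eq_zero, Nat.succ_mod_succ_eq_zero_iff, Nat.add_sub_cancel]

variable (hd : IsCantorBase d)
include hd

lemma IsCantorBase.pos (j : ℕ) : 0 < d j := by
  rcases Nat.eq_zero_or_pos j with rfl | hj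
  · simp [hd.d_zero]
  · exact lt_of_lt_of_le two_pos (hd.two_le j hj)

lemma q_zero : q d 0 = 1 := by simp [q, hd.d_zero]

lemma q_pos (j : ℕ) : 0 < q d j :=
  prod_pos fun i _ => hd.pos i

lemma q_strictMono : StrictMono (q d) := by
  refine strictMono_nat_of_lt_succ fun j => ?_
  have := hd.two_le (j + 1) (by omega)
  have := q_pos hd j
  rw [q_succ]
  nlinarith

lemma lt_q (n : ℕ) : n < q d n := by
  induction n with
  | zero => simp [q_zero hd]
  | succ n ih => have := q_strictMono hd (by omega : n < n + 1); omega

lemma two_le_q {r : ℕ} (hr : 1 ≤ r) : 2 ≤ q d r := by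
  have := q_strictMono hd hr
  rw [q_zero hd] at this
  omega

lemma digit_lt (n j : ℕ) : digit d n j < d j :=
  Nat.mod_lt _ (hd.pos j)

lemma digit_eq_zero_of_le {n r : ℕ} (h : n ≤ r) : digit d n (r + 1) = 0 :=
  digit_eq_zero_of_lt (by simpa using h.trans_lt (lt_q hd r))

lemma digit_eq_zero_of_dvd {n j k : ℕ} (hj : 1 ≤ j) (hjk : j ≤ k) (h : q d k ∣ n) :
    digit d n j = 0 := by
  obtain ⟨i, rfl⟩ : ∃ i, j = i + 1 := ⟨j - 1, by omega⟩
  obtain ⟨t, rfl⟩ := (q_dvd_q hjk).trans h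
  rw [digit, Nat.add_sub_cancel, q_succ, mul_assoc, Nat.mul_div_cancel_left _ (q_pos hd i),
    Nat.mul_mod_right]

lemma digit_q (r j : ℕ) : digit d (q d r) (j + 1) = if j = r then 1 else 0 := by
  rcases lt_trichotomy j r with h | rfl | h
  · rw [if_neg h.ne, digit_eq_zero_of_dvd hd (by omega) h dvd_rfl]
  · rw [if_pos rfl, digit, Nat.add_sub_cancel, Nat.div_self (q_pos hd j)]
    exact Nat.mod_eq_of_lt (hd.two_le (j + 1) (by omega))
  · rw [if_neg h.ne', digit_eq_zero_of_lt (by simpa using q_strictMono hd h)]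

/-- Base-`d` analogue of `10^k ∣ n + 1 ↔ the last k decimal digits of n are 9`. -/
lemma q_dvd_succ_iff {n k : ℕ} :
    q d k ∣ n + 1 ↔ ∀ j, 1 ≤ j → j ≤ k → digit d n j = d j - 1 := by
  induction k with
  | zero => simp [q_zero hd]; omega
  | succ k ih =>
    have hdigit : digit d n (k + 1) = n / q d k % d (k + 1) := by simp [digit]
    rw [q_succ]
    constructor
    · intro h j hj hjk
      have hk : q d k ∣ n + 1 := dvd_of_mul_right_dvd h
      rcases (show j ≤ k ∨ j = k + 1 by omega) with hjk | rfl
      · exact ih.1 hk j hj hjk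
      · rw [hdigit, ← dvd_add_one_iff_mod_eq (hd.pos _), ← Nat.succ_div_of_dvd hk]
        exact (Nat.dvd_div_iff_mul_dvd hk).2 h
    · intro h
      have hk := ih.2 fun j hj hjk => h j hj (by omega)
      have hdk := (dvd_add_one_iff_mod_eq (hd.pos (k + 1))).2 (hdigit ▸ h (k + 1) (by omega) le_rfl)
      rw [← Nat.succ_div_of_dvd hk] at hdk
      exact (Nat.dvd_div_iff_mul_dvd hk).1 hdk

lemma one_le_zeta_and_digit_ne (n : ℕ) :
    1 ≤ zeta d n ∧ digit d n (zeta d n) ≠ d (zeta d n) - 1 := by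
  refine Nat.sInf_mem (s := {j | 1 ≤ j ∧ digit d n j ≠ d j - 1}) ⟨n + 1, by simp, ?_⟩
  rw [digit_eq_zero_of_le hd le_rfl]
  have := hd.two_le (n + 1) (by omega)
  omega

lemma one_le_zeta (n : ℕ) : 1 ≤ zeta d n := (one_le_zeta_and_digit_ne hd n).1

lemma q_dvd_succ_of_lt_zeta {n k : ℕ} (h : k < zeta d n) : q d k ∣ n + 1 :=
  (q_dvd_succ_iff hd).2 fun _ hj hjk => digit_of_lt_zeta hj (by omega)

lemma not_q_zeta_dvd_succ (n : ℕ) : ¬ q d (zeta d n) ∣ n + 1 := fun h =>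
  (one_le_zeta_and_digit_ne hd n).2 ((q_dvd_succ_iff hd).1 h _ (one_le_zeta hd n) le_rfl)

lemma digit_succ_of_lt_zeta {n j : ℕ} (hj : 1 ≤ j) (h : j < zeta d n) :
    digit d (n + 1) j = 0 :=
  digit_eq_zero_of_dvd hd hj le_rfl (q_dvd_succ_of_lt_zeta hd h)

lemma digit_succ_zeta (n : ℕ) : digit d (n + 1) (zeta d n) = digit d n (zeta d n) + 1 := by
  obtain ⟨hz, hne⟩ := one_le_zeta_and_digit_ne hd n
  have hlt : digit d n (zeta d n) + 1 < d (zeta d n) := by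
    have := digit_lt hd n (zeta d n); omega
  have hdvd := q_dvd_succ_of_lt_zeta hd (show zeta d n - 1 < zeta d n by omega)
  unfold digit at hlt ⊢
  rw [Nat.succ_div_of_dvd hdvd, Nat.add_mod, Nat.one_mod_eq_one.2 (by omega),
    Nat.mod_eq_of_lt hlt]

lemma digit_succ_of_zeta_lt {n j : ℕ} (h : zeta d n < j) : digit d (n + 1) j = digit d n j :=
  digit_eq_of_div_eq h (Nat.succ_div_of_not_dvd (not_q_zeta_dvd_succ hd n))

lemma mod_q_of_lt_zeta {n r : ℕ} (h : r < zeta d n) : n % q d r = q d r - 1 :=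
  (dvd_add_one_iff_mod_eq (q_pos hd r)).1 (q_dvd_succ_of_lt_zeta hd h)

lemma q_sub_one_le_of_lt_zeta {n r : ℕ} (h : r < zeta d n) : q d r - 1 ≤ n :=
  mod_q_of_lt_zeta hd h ▸ Nat.mod_le n (q d r)

lemma sub_q_sub_one_of_lt_zeta {n r : ℕ} (h : r < zeta d n) :
    n - (q d r - 1) = q d r * (n / q d r) := by
  have := mod_q_of_lt_zeta hd h
  have := Nat.div_add_mod n (q d r)
  omega

lemma digit_sub_of_le {n r j : ℕ} (hj : 1 ≤ j) (hjr : j ≤ r) (h : r < zeta d n) :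
    digit d (n - (q d r - 1)) j = 0 :=
  digit_eq_zero_of_dvd hd hj hjr (sub_q_sub_one_of_lt_zeta hd h ▸ dvd_mul_right _ _)

lemma digit_sub_of_lt {n r j : ℕ} (hrj : r < j) (h : r < zeta d n) :
    digit d (n - (q d r - 1)) j = digit d n j :=
  digit_eq_of_div_eq hrj (by
    rw [sub_q_sub_one_of_lt_zeta hd h, Nat.mul_div_cancel_left _ (q_pos hd r)])

lemma sum_Icc_pred_mul_q (r : ℕ) :
    ∑ j ∈ Icc 1 r, (d j - 1) * q d (j - 1) = q d r - 1 := by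
  induction r with
  | zero => simp [q_zero hd]
  | succ r ih =>
    rw [sum_Icc_succ_top (by omega), ih, Nat.add_sub_cancel, q_succ, Nat.sub_one_mul,
      mul_comm (d (r + 1))]
    have := q_pos hd r
    have := Nat.le_mul_of_pos_right (q d r) (hd.pos (r + 1))
    omega

end Numeration

section Vlam

variable {d : ℕ → ℕ} {p : ℕ → ℝ} {lam : ℂ}

lemma vlam_zero : vlam d p lam 0 = 1 := by
  simp [vlam, digit]

variable (hd : IsCantorBase d)
include hd

lemma vlam_eq_prod_range {n N : ℕ} (hN : n ≤ N) :
    vlam d p lam n = ∏ r ∈ range N, iota d p lam (r + 1) ^ digit d n (r + 1) := by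
  refine finprod_eq_prod_of_mulSupport_subset _ fun r hr => ?_
  by_contra hrN
  simp only [coe_range, Set.mem_Iio, not_lt] at hrN
  exact hr (by dsimp only; rw [digit_eq_zero_of_le hd (hN.trans hrN), pow_zero])

lemma vlam_q (r : ℕ) : vlam d p lam (q d r) = iota d p lam (r + 1) := by
  rw [vlam, finprod_eq_single _ r fun j hj => by rw [digit_q hd, if_neg hj, pow_zero],
    digit_q hd, if_pos rfl, pow_one]

lemma vlam_eq_pow_mul_of_digit_eq {m m' j e : ℕ} (hj : 1 ≤ j)
    (hagree : ∀ i, 1 ≤ i → i ≠ j → digit d m i = digit d m' i)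
    (hdig : digit d m j = digit d m' j + e) :
    vlam d p lam m = iota d p lam j ^ e * vlam d p lam m' := by
  have hjN : j - 1 ∈ range (m + m' + j) := mem_range.2 (by omega)
  have hrest : ∏ r ∈ (range (m + m' + j)).erase (j - 1), iota d p lam (r + 1) ^ digit d m (r + 1)
      = ∏ r ∈ (range (m + m' + j)).erase (j - 1), iota d p lam (r + 1) ^ digit d m' (r + 1) :=
    prod_congr rfl fun r hr => by
      rw [hagree (r + 1) (by omega) (by have := (mem_erase.1 hr).1; omega)]
  rw [vlam_eq_prod_range hd (show m ≤ m + m' + j by omega),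
    vlam_eq_prod_range hd (show m' ≤ m + m' + j by omega), ← mul_prod_erase _ _ hjN,
    ← mul_prod_erase _ _ hjN, hrest, Nat.sub_add_cancel hj, hdig, pow_add]
  ring

end Vlam

section Iota

variable {d : ℕ → ℕ} {p : ℕ → ℝ} (hp : ∀ j, 1 ≤ j → p j ≠ 0) (lam : ℂ)
include hp

lemma p_one_mul_iota_one : (p 1 : ℂ) * iota d p lam 1 = lam - (1 - p 1) := by
  have : (p 1 : ℂ) ≠ 0 := Complex.ofReal_ne_zero.2 (hp 1 le_rfl)
  rw [iota]
  field_simp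
  rfl

lemma iota_pow {r : ℕ} (hr : 1 ≤ r) :
    iota d p lam r ^ d r = p (r + 1) * iota d p lam (r + 1) + (1 - p (r + 1)) := by
  obtain ⟨i, rfl⟩ : ∃ i, r = i + 1 := ⟨r - 1, by omega⟩
  have : (p (i + 1 + 1) : ℂ) ≠ 0 := Complex.ofReal_ne_zero.2 (hp _ (by omega))
  simp only [iota, Nat.add_sub_cancel, ftil, Function.comp_apply, f]
  field_simp
  ring

end Iota

/-- `(S w)(n)`, with the jump `Σ_{j ≤ r} (d_j - 1) q_{j-1}` of `s` written as `q_r - 1`. -/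
def applyS (d : ℕ → ℕ) (p : ℕ → ℝ) (w : ℕ → ℂ) (n : ℕ) : ℂ :=
  (1 - p 1) * w n + (∏ j ∈ Icc 1 (zeta d n), (p j : ℂ)) * w (n + 1)
    + ∑ r ∈ Icc 1 (zeta d n - 1), (1 - p (r + 1)) * (∏ j ∈ Icc 1 r, (p j : ℂ)) * w (n - (q d r - 1))

section Eigen

variable {d : ℕ → ℕ} {p : ℕ → ℝ} {lam : ℂ}

lemma applyS_sub_mul (w u : ℕ → ℂ) (c : ℂ) (n : ℕ) :
    applyS d p (fun m => w m - c * u m) n = applyS d p w n - c * applyS d p u n := by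
  simp only [applyS, mul_sub, sum_sub_distrib, mul_add, mul_sum, mul_left_comm c]
  ring

lemma prod_Icc_ne_zero (hp : ∀ j, 1 ≤ j → p j ≠ 0) (k : ℕ) : ∏ j ∈ Icc 1 k, (p j : ℂ) ≠ 0 :=
  prod_ne_zero_iff.2 fun j hj => Complex.ofReal_ne_zero.2 (hp j (mem_Icc.1 hj).1)

lemma eq_zero_of_applyS_eq_mul (hp : ∀ j, 1 ≤ j → p j ≠ 0) {u : ℕ → ℂ}
    (hu : ∀ n, lam * u n = applyS d p u n) (h0 : u 0 = 0) (n : ℕ) : u n = 0 := by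
  induction n using Nat.strong_induction_on with
  | _ n ih =>
    rcases n with _ | n
    · exact h0
    have hrow := hu n
    rw [applyS, ih n n.lt_succ_self,
      sum_eq_zero fun r _ => by rw [ih _ (by omega), mul_zero]] at hrow
    simpa [prod_Icc_ne_zero hp] using hrow.symm

variable (hd : IsCantorBase d) (hp : ∀ j, 1 ≤ j → p j ≠ 0)
include hd hp

/-- Unfolds the carries at the levels `1, …, t` of the eigenvalue equation by `iota_pow`. -/
lemma sub_mul_vlam_eq_of_lt_zeta (n : ℕ) {t : ℕ} (ht : t < zeta d n) :
    (lam - (1 - p 1)) * vlam d p lam n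
      = ∑ r ∈ Icc 1 t, (1 - p (r + 1)) * (∏ j ∈ Icc 1 r, (p j : ℂ)) * vlam d p lam (n - (q d r - 1))
        + (∏ j ∈ Icc 1 (t + 1), (p j : ℂ)) * iota d p lam (t + 1)
          * vlam d p lam (n - (q d t - 1)) := by
  induction t with
  | zero =>
    simp [q_zero hd, p_one_mul_iota_one hp lam]
  | succ t ih =>
    have hd1 := hd.two_le (t + 1) (by omega)
    have hv : vlam d p lam (n - (q d t - 1))
        = iota d p lam (t + 1) ^ (d (t + 1) - 1) * vlam d p lam (n - (q d (t + 1) - 1)) := by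
      refine vlam_eq_pow_mul_of_digit_eq hd (by omega) (fun i hi hit => ?_) ?_
      · rcases lt_or_gt_of_ne hit with hlt | hgt
        · rw [digit_sub_of_le hd hi (by omega) (by omega),
            digit_sub_of_le hd hi (by omega) ht]
        · rw [digit_sub_of_lt hd (by omega) (by omega), digit_sub_of_lt hd hgt ht]
      · rw [digit_sub_of_lt hd (by omega) (by omega), digit_sub_of_le hd (by omega) le_rfl ht,
          digit_of_lt_zeta (by omega) ht, zero_add]
    have hpow : iota d p lam (t + 1) * iota d p lam (t + 1) ^ (d (t + 1) - 1)
        = p (t + 1 + 1) * iota d p lam (t + 1 + 1) + (1 - p (t + 1 + 1)) := by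
      rw [← pow_succ', Nat.sub_add_cancel (by omega), iota_pow hp lam (by omega)]
    rw [ih (by omega), hv, sum_Icc_succ_top (by omega), prod_Icc_succ_top (b := t + 1) (by omega)]
    linear_combination
      (∏ j ∈ Icc 1 (t + 1), (p j : ℂ)) * vlam d p lam (n - (q d (t + 1) - 1)) * hpow

lemma mul_vlam_eq_applyS (n : ℕ) : lam * vlam d p lam n = applyS d p (vlam d p lam) n := by
  have hz := one_le_zeta hd n
  have hsucc : vlam d p lam (n + 1)
      = iota d p lam (zeta d n) * vlam d p lam (n - (q d (zeta d n - 1) - 1)) := by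
    have hlt : zeta d n - 1 < zeta d n := by omega
    simpa using vlam_eq_pow_mul_of_digit_eq (lam := lam) (e := 1) hd hz (fun i hi hiz => by
      rcases lt_or_gt_of_ne hiz with h | h
      · rw [digit_succ_of_lt_zeta hd hi h, digit_sub_of_le hd hi (by omega) hlt]
      · rw [digit_succ_of_zeta_lt hd h, digit_sub_of_lt hd (by omega) hlt])
      (by rw [digit_succ_zeta hd, digit_sub_of_lt hd hlt hlt])
  have hpart := sub_mul_vlam_eq_of_lt_zeta hd hp (lam := lam) n
    (show zeta d n - 1 < zeta d n by omega)
  rw [Nat.sub_add_cancel hz] at hpart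
  rw [applyS, hsucc]
  linear_combination hpart

lemma eq_mul_vlam_of_applyS_eq_mul {w : ℕ → ℂ} (hw : ∀ n, lam * w n = applyS d p w n) (n : ℕ) :
    w n = w 0 * vlam d p lam n := by
  refine sub_eq_zero.1 (eq_zero_of_applyS_eq_mul (d := d) (lam := lam) hp
    (u := fun m => w m - w 0 * vlam d p lam m) (fun m => ?_) (by simp [vlam_zero]) n)
  rw [applyS_sub_mul, ← hw, ← mul_vlam_eq_applyS hd hp]
  ring

end Eigen

section RowExpansion

variable {d : ℕ → ℕ} (p : ℕ → ℝ) {n : ℕ}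

lemma s_succ : s d p n (n + 1) = ∏ j ∈ Icc 1 (zeta d n), p j := if_pos rfl

lemma s_self : s d p n n = 1 - p 1 := by rw [s, if_neg (by omega), if_pos rfl]

variable (hd : IsCantorBase d)
include hd

lemma s_sub_q_sub_one {r : ℕ} (hr1 : 1 ≤ r) (hr : r < zeta d n) :
    s d p n (n - (q d r - 1)) = (1 - p (r + 1)) * ∏ j ∈ Icc 1 r, p j := by
  have h2 := two_le_q hd hr1
  have hle := q_sub_one_le_of_lt_zeta hd hr
  have hex : ∃ r', 1 ≤ r' ∧ r' + 1 ≤ zeta d n ∧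
      n = n - (q d r - 1) + ∑ j ∈ Icc 1 r', (d j - 1) * q d (j - 1) :=
    ⟨r, hr1, hr, by rw [sum_Icc_pred_mul_q hd]; omega⟩
  rw [s, if_neg (by omega), if_neg (by omega), dif_pos hex]
  have hchoose := hex.choose_spec.2.2
  rw [sum_Icc_pred_mul_q hd] at hchoose
  have := q_pos hd hex.choose
  rw [(q_strictMono hd).injective (show q d hex.choose = q d r by omega)]

lemma s_eq_zero {m : ℕ} (h1 : m ≠ n + 1) (h2 : m ≠ n)
    (h3 : ∀ r ∈ Icc 1 (zeta d n - 1), m ≠ n - (q d r - 1)) : s d p n m = 0 := by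
  rw [s, if_neg h1, if_neg h2, dif_neg]
  rintro ⟨r, hr1, hr, hn⟩
  rw [sum_Icc_pred_mul_q hd] at hn
  exact h3 r (mem_Icc.2 ⟨hr1, by omega⟩) (by omega)

lemma tsum_s_mul_eq_applyS (w : ℕ → ℂ) (n : ℕ) :
    ∑' m, (s d p n m : ℂ) * w m = applyS d p w n := by
  classical
  set jumps := (Icc 1 (zeta d n - 1)).image fun r => n - (q d r - 1)
  have hmem : ∀ r ∈ Icc 1 (zeta d n - 1), 1 ≤ r ∧ r < zeta d n := fun r hr => by
    have := mem_Icc.1 hr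
    have := one_le_zeta hd n
    omega
  have hjump : ∀ r ∈ Icc 1 (zeta d n - 1), 2 ≤ q d r ∧ q d r - 1 ≤ n := fun r hr =>
    ⟨two_le_q hd (hmem r hr).1, q_sub_one_le_of_lt_zeta hd (hmem r hr).2⟩
  have hn : n ∉ jumps := by
    simp only [jumps, mem_image, not_exists, not_and]
    intro r hr
    have := hjump r hr
    omega
  have hsucc : n + 1 ∉ insert n jumps := by
    simp only [jumps, mem_insert, mem_image, not_or, not_exists, not_and]
    exact ⟨by omega, fun r hr => by omega⟩
  have hinj : Set.InjOn (fun r => n - (q d r - 1)) (Icc 1 (zeta d n - 1)) :=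
    fun r hr r' hr' h => by
      have := hjump r hr
      have := hjump r' hr'
      exact (q_strictMono hd).injective (by simp only at h; omega)
  have hzero : ∀ m ∉ insert (n + 1) (insert n jumps), (s d p n m : ℂ) * w m = 0 := fun m hm => by
    simp only [jumps, mem_insert, mem_image, not_or, not_exists, not_and] at hm
    rw [s_eq_zero p hd hm.1 hm.2.1 fun r hr h => hm.2.2 r hr h.symm, Complex.ofReal_zero,
      zero_mul]
  rw [tsum_eq_sum hzero, sum_insert hsucc, sum_insert hn, sum_image hinj,
    sum_congr rfl fun r hr => by rw [s_sub_q_sub_one p hd (hmem r hr).1 (hmem r hr).2],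
    s_succ, s_self, applyS]
  push_cast
  ring

end RowExpansion

lemma prod_Icc_one_eq_prod_range (p : ℕ → ℝ) (n : ℕ) :
    ∏ j ∈ Icc 1 n, p j = ∏ j ∈ range n, p (j + 1) := by
  induction n with
  | zero => simp
  | succ n ih => rw [prod_Icc_succ_top (by omega), ih, prod_range_succ]

lemma not_tendsto_prod_Icc_zero_of_summable {p : ℕ → ℝ} (hp : ∀ j, 1 ≤ j → p j ≠ 0)
    (hs : Summable fun j => ‖p (j + 1) - 1‖) :
    ¬ Tendsto (fun n => ∏ j ∈ Icc 1 n, p j) atTop (𝓝 0) := by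
  intro h0
  have hne := tprod_one_add_ne_zero_of_summable (f := fun j => p (j + 1) - 1)
    (fun j => by simpa using hp (j + 1) (by omega)) hs
  have hlim := (multipliable_one_add_of_summable hs).hasProd.tendsto_prod_nat
  simp only [add_sub_cancel, ← prod_Icc_one_eq_prod_range] at hlim hne
  exact hne (tendsto_nhds_unique hlim h0)

lemma summable_norm_p_sub_one {d : ℕ → ℕ} {p : ℕ → ℝ} {lam : ℂ} (hd : IsCantorBase d)
    (hp : ∀ j, 1 ≤ j → p j ∈ Set.Ioc 0 1) (hι : Summable fun r => ‖iota d p lam (r + 1)‖) :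
    Summable fun j => ‖p (j + 1) - 1‖ := by
  have hι' : Summable fun r => ‖iota d p lam r‖ := (summable_nat_add_iff 1).1 hι
  refine Summable.of_norm_bounded_eventually_nat (hι.add hι') ?_
  filter_upwards [hι'.tendsto_atTop_zero.eventually_le_const one_pos, eventually_ge_atTop 1]
    with r hsmall hr
  obtain ⟨hp0, hp1⟩ := hp (r + 1) (by omega)
  have hrec : (p (r + 1) - 1 : ℂ) = p (r + 1) * iota d p lam (r + 1) - iota d p lam r ^ d r := by
    rw [iota_pow (fun j hj => (hp j hj).1.ne') lam hr]
    ring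
  rw [norm_norm]
  calc ‖p (r + 1) - 1‖ = ‖(p (r + 1) - 1 : ℂ)‖ := by norm_cast
    _ ≤ p (r + 1) * ‖iota d p lam (r + 1)‖ + ‖iota d p lam r‖ ^ d r := by
      rw [hrec]
      refine (norm_sub_le _ _).trans_eq ?_
      rw [norm_mul, norm_pow, Complex.norm_real, Real.norm_of_nonneg hp0.le]
    _ ≤ ‖iota d p lam (r + 1)‖ + ‖iota d p lam r‖ := by
      gcongr
      · exact mul_le_of_le_one_left (norm_nonneg _) hp1
      · exact pow_le_of_le_one (norm_nonneg _) hsmall (hd.pos r).ne'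

/-- if `Π_{j≥1} p_j = 0`, then `S` acting on `l¹` has no eigenvalues. -/
theorem stmt16 (d : ℕ → ℕ) (p : ℕ → ℝ)
    (hd0 : d 0 = 1) (hd : ∀ j, 1 ≤ j → 2 ≤ d j)
    (hp : ∀ j, 1 ≤ j → p j ∈ Set.Ioc (0 : ℝ) 1)
    (hprod : Filter.Tendsto (fun n => ∏ j ∈ Finset.Icc 1 n, p j) Filter.atTop (nhds (0 : ℝ)))
    (T1 : lp (fun _ : ℕ => ℂ) 1 →L[ℂ] lp (fun _ : ℕ => ℂ) 1)
    (hT1 : ∀ (w : lp (fun _ : ℕ => ℂ) 1) (n : ℕ),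
      T1 w n = ∑' m : ℕ, (s d p n m : ℂ) * w m) :
    ¬ ∃ (lam : ℂ) (v : lp (fun _ : ℕ => ℂ) 1), v ≠ 0 ∧ T1 v = lam • v := by
  rintro ⟨lam, v, hv0, hTv⟩
  have hbase : IsCantorBase d := ⟨hd0, hd⟩
  have hpne : ∀ j, 1 ≤ j → p j ≠ 0 := fun j hj => (hp j hj).1.ne'
  have heigen : ∀ n, lam * v n = applyS d p v n := fun n => by
    rw [← tsum_s_mul_eq_applyS p hbase, ← hT1, hTv, lp.coeFn_smul, Pi.smul_apply, smul_eq_mul]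
  have hv : ∀ n, v n = v 0 * vlam d p lam n := eq_mul_vlam_of_applyS_eq_mul hbase hpne heigen
  have hv00 : v 0 ≠ 0 := fun h => hv0 (lp.ext (funext fun n => by simp [hv n, h]))
  have hι : Summable fun r => ‖iota d p lam (r + 1)‖ := by
    have hq := ((lp.memℓp v).summable (by norm_num : 0 < (1 : ℝ≥0∞).toReal)).comp_injective
      (q_strictMono hbase).injective
    simp only [ENNReal.toReal_one, Real.rpow_one, Function.comp_def, hv (q d _), vlam_q hbase,
      norm_mul] at hq
    exact (summable_mul_left_iff (norm_ne_zero_iff.2 hv00)).1 hq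
  exact not_tendsto_prod_Icc_zero_of_summable hpne (summable_norm_p_sub_one hbase hp hι) hprod

end AMFC
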